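/- arXiv:1809.02470 — 2 statements merged into one kernel-verified Lean document; each statement's English description precedes it below -/
import Mathlib

section
/- Let ∑ a¹_n, ∑ a²_n, ∑ a³_n be conditionally convergent series of real numbers. Then the family F = { φ_A : A ⊆ ℕ is tame with respect to all three series, and φ_A is not the empty partial function } is a full, union-closed subset of Fn(3,2). -/
/-!
On a set `A` that is tame for `∑ a n`, the subseries over `A` is the sum of an absolutely
convergent part and a part of constant sign, so it converges or tends to `±∞` according to
which of its positive and nonpositive parts converge absolutely. Absolute convergence of a
part is preserved by finite unions, and for tame `A`, `B` with compatible `φ_A`, `φ_B` this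
gives `φ_{A ∪ B} = φ_A ∪ φ_B`.

For fullness, split `ℕ` into the `2³` cells on which the signs of the three series are
constant. Every cell is tame. Both sign parts of a conditionally convergent series have
infinite absolute sum, so one of the four cells on which `a^x` has sign `y` already carries
infinite absolute sum of `a^x`, and on that cell `φ(x) = y`.
-/

open Filter

/-- The partial sums of the subseries of `a` over `A`: `S N = ∑_{n < N, n ∈ A} a n`. -/
noncomputable def partialSum (a : ℕ → ℝ) (A : Set ℕ) (N : ℕ) : ℝ :=
  ∑ n ∈ Finset.range N, Set.indicator A a n

/-- `A` sends the series `∑ a n` to infinity: the subseries over `A` tends to `+∞` or `-∞`. -/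
def SendsToInfinity (a : ℕ → ℝ) (A : Set ℕ) : Prop :=
  Tendsto (partialSum a A) atTop atTop ∨ Tendsto (partialSum a A) atTop atBot

/-- `∑ a n` is conditionally convergent: partial sums converge, but `∑ |a n| = ∞`. -/
def CondConv (a : ℕ → ℝ) : Prop :=
  (∃ L : ℝ, Tendsto (fun N => ∑ n ∈ Finset.range N, a n) atTop (nhds L)) ∧
    ¬ Summable (fun n => |a n|)

/-- The subseries of `a` over `A` is absolutely convergent: `∑_{n ∈ A} |a n| < ∞`. -/
def AbsConvOn (a : ℕ → ℝ) (A : Set ℕ) : Prop :=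
  Summable (Set.indicator A fun n => |a n|)

/-- `A` is tame w.r.t. `∑ a n` if at least one of the positive/nonpositive parts of the
subseries over `A` is absolutely convergent. -/
def Tame (a : ℕ → ℝ) (A : Set ℕ) : Prop :=
  AbsConvOn a {n ∈ A | 0 < a n} ∨ AbsConvOn a {n ∈ A | a n ≤ 0}

/-- A partial function from `{1,2,3}` to the two-element set `{p, n}` (here `p = true`,
`n = false`), encoded as `Fin 3 → Option Bool`. `Fn32` is the set of such partial functions
with nonempty domain. -/
def Fn32 : Set (Fin 3 → Option Bool) :=
  {f | ∃ x, f x ≠ none}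

/-- The domain of a partial function. -/
def pdom (f : Fin 3 → Option Bool) : Finset (Fin 3) :=
  Finset.univ.filter (fun x => f x ≠ none)

/-- `F` is full: every value is attained at every point by some member of `F`. -/
def Full (F : Set (Fin 3 → Option Bool)) : Prop :=
  ∀ x : Fin 3, ∀ y : Bool, ∃ f ∈ F, f x = some y

/-- Two partial functions are compatible if they agree on the intersection of their domains. -/
def Compatible (f g : Fin 3 → Option Bool) : Prop :=
  ∀ x, f x = none ∨ g x = none ∨ f x = g x

/-- The union of two (compatible) partial functions. -/
def pUnion (f g : Fin 3 → Option Bool) : Fin 3 → Option Bool :=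
  fun x => (f x).orElse (fun _ => g x)

/-- `F` is union-closed: the union of any two compatible members of `F` is in `F`. -/
def UnionClosed (F : Set (Fin 3 → Option Bool)) : Prop :=
  ∀ f ∈ F, ∀ g ∈ F, Compatible f g → pUnion f g ∈ F

open scoped Classical in
/-- `phi a A` is the partial function recording, for each of the three series, whether the
subseries over `A` tends to `+∞` (`p = true`) or `-∞` (`n = false`), undefined otherwise. -/
noncomputable def phi (a : Fin 3 → ℕ → ℝ) (A : Set ℕ) : Fin 3 → Option Bool :=
  fun i =>
    if Tendsto (partialSum (a i) A) atTop atTop then some true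
    else if Tendsto (partialSum (a i) A) atTop atBot then some false
    else none

open Set

open scoped Classical in
noncomputable def divergenceSign (a : ℕ → ℝ) (A : Set ℕ) : Option Bool :=
  if Tendsto (partialSum a A) atTop atTop then some true
  else if Tendsto (partialSum a A) atTop atBot then some false
  else none

lemma phi_apply (a : Fin 3 → ℕ → ℝ) (A : Set ℕ) (i : Fin 3) :
    phi a A i = divergenceSign (a i) A := rfl

open scoped Classical in
/-- The value of `divergenceSign` on a tame set, read off from which parts of the subseries
converge absolutely: `p` for the positive part, `q` for the nonpositive one. -/
noncomputable def signCode (p q : Prop) : Option Bool :=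
  if ¬p then some true else if ¬q then some false else none

lemma signCode_eq_none_iff {p q : Prop} : signCode p q = none ↔ p ∧ q := by
  by_cases hp : p <;> by_cases hq : q <;> simp [signCode, hp, hq]

lemma signCode_and {p q p' q' : Prop} (h : p ∨ q) (h' : p' ∨ q')
    (hc : signCode p q = none ∨ signCode p' q' = none ∨ signCode p q = signCode p' q') :
    ((p ∧ p') ∨ (q ∧ q')) ∧
      signCode (p ∧ p') (q ∧ q') = (signCode p q).orElse fun _ => signCode p' q' := by
  by_cases hp : p <;> by_cases hq : q <;> by_cases hp' : p' <;> by_cases hq' : q' <;>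
    simp_all [signCode]

section Subseries

variable {a : ℕ → ℝ} {A B S T : Set ℕ}

lemma abs_indicator_eq (a : ℕ → ℝ) (S : Set ℕ) :
    (fun n => |S.indicator a n|) = S.indicator fun n => |a n| :=
  (indicator_comp_of_zero (g := abs) abs_zero).symm

lemma AbsConvOn.summable_indicator (h : AbsConvOn a S) : Summable (S.indicator a) :=
  .of_abs (by rwa [abs_indicator_eq])

lemma AbsConvOn.mono (h : AbsConvOn a T) (hST : S ⊆ T) : AbsConvOn a S :=
  .of_nonneg_of_le (indicator_nonneg fun _ _ => abs_nonneg _)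
    (indicator_le_indicator_of_subset hST fun _ => abs_nonneg _) h

lemma absConvOn_union_iff : AbsConvOn a (S ∪ T) ↔ AbsConvOn a S ∧ AbsConvOn a T := by
  refine ⟨fun h => ⟨h.mono subset_union_left, h.mono subset_union_right⟩,
    fun ⟨hS, hT⟩ => ?_⟩
  refine .of_nonneg_of_le (indicator_nonneg fun _ _ => abs_nonneg _) (fun n => ?_) (hS.add hT)
  have key := congrFun (indicator_union_add_inter (fun n => |a n|) S T) n
  have hinter : 0 ≤ (S ∩ T).indicator (fun n => |a n|) n :=
    indicator_nonneg (fun _ _ => abs_nonneg _) n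
  simp only [Pi.add_apply] at key ⊢
  linarith

lemma absConvOn_of_eq_empty (h : S = ∅) : AbsConvOn a S := by
  rw [h, AbsConvOn, indicator_empty]
  exact summable_zero

lemma absConvOn_neg_iff : AbsConvOn (-a) S ↔ AbsConvOn a S := by
  simp only [AbsConvOn, Pi.neg_apply, abs_neg]

lemma exists_not_absConvOn_fiber {β : Type*} {f : ℕ → β} {T : Finset β}
    (h : ¬AbsConvOn a (f ⁻¹' T)) : ∃ b ∈ T, ¬AbsConvOn a (f ⁻¹' {b}) := by
  classical
  by_contra! hfib
  have hsum : (f ⁻¹' T).indicator (fun n => |a n|) =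
      fun n => ∑ b ∈ T, (f ⁻¹' {b}).indicator (fun n => |a n|) n := by
    funext n
    simp [indicator_apply]
  exact h (by rw [AbsConvOn, hsum]; exact summable_sum hfib)

lemma partialSum_neg (a : ℕ → ℝ) (S : Set ℕ) : partialSum (-a) S = -partialSum a S := by
  funext N
  simp only [partialSum, Pi.neg_apply, ← Finset.sum_neg_distrib, indicator_neg']

lemma partialSum_eq_add (a : ℕ → ℝ) (A : Set ℕ) (N : ℕ) :
    partialSum a A N =
      partialSum a {n ∈ A | 0 < a n} N + partialSum a {n ∈ A | a n ≤ 0} N := by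
  simp only [partialSum, ← Finset.sum_add_distrib]
  refine Finset.sum_congr rfl fun n _ => ?_
  by_cases hA : n ∈ A <;> by_cases hpos : 0 < a n <;> simp [hA, hpos, not_lt.1]

lemma tendsto_partialSum_nhds (h : AbsConvOn a S) :
    Tendsto (partialSum a S) atTop (nhds (∑' n, S.indicator a n)) :=
  h.summable_indicator.hasSum.tendsto_sum_nat

lemma tendsto_partialSum_atTop (hS : ∀ n ∈ S, 0 ≤ a n) (h : ¬AbsConvOn a S) :
    Tendsto (partialSum a S) atTop atTop := by
  have heq : (S.indicator fun n => |a n|) = S.indicator a :=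
    indicator_congr fun n hn => abs_of_nonneg (hS n hn)
  rw [AbsConvOn, heq] at h
  exact (not_summable_iff_tendsto_nat_atTop_of_nonneg (indicator_nonneg hS)).1 h

lemma tendsto_partialSum_atBot (hS : ∀ n ∈ S, a n ≤ 0) (h : ¬AbsConvOn a S) :
    Tendsto (partialSum a S) atTop atBot := by
  have := tendsto_partialSum_atTop (a := -a) (fun n hn => neg_nonneg.2 (hS n hn))
    (absConvOn_neg_iff.not.2 h)
  rw [partialSum_neg] at this
  exact tendsto_neg_atTop_iff.1 this

lemma divergenceSign_of_tendsto_atTop (h : Tendsto (partialSum a A) atTop atTop) :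
    divergenceSign a A = some true :=
  if_pos h

lemma divergenceSign_of_tendsto_atBot (h : Tendsto (partialSum a A) atTop atBot) :
    divergenceSign a A = some false :=
  (if_neg (h.not_tendsto disjoint_atBot_atTop)).trans (if_pos h)

lemma divergenceSign_of_tendsto_nhds {L : ℝ} (h : Tendsto (partialSum a A) atTop (nhds L)) :
    divergenceSign a A = none :=
  (if_neg (not_tendsto_atTop_of_tendsto_nhds h)).trans
    (if_neg (not_tendsto_atBot_of_tendsto_nhds h))

lemma Tame.divergenceSign_eq (h : Tame a A) :
    divergenceSign a A =
      signCode (AbsConvOn a {n ∈ A | 0 < a n}) (AbsConvOn a {n ∈ A | a n ≤ 0}) := by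
  have hsplit := fun N => (partialSum_eq_add a A N).symm
  by_cases hp : AbsConvOn a {n ∈ A | 0 < a n} <;>
    by_cases hq : AbsConvOn a {n ∈ A | a n ≤ 0} <;>
    simp only [signCode, hp, hq, not_true, not_false_eq_true, if_true, if_false]
  · exact divergenceSign_of_tendsto_nhds
      (((tendsto_partialSum_nhds hp).add (tendsto_partialSum_nhds hq)).congr hsplit)
  · exact divergenceSign_of_tendsto_atBot (((tendsto_partialSum_nhds hp).add_atBot
      (tendsto_partialSum_atBot (fun n hn => hn.2) hq)).congr hsplit)
  · exact divergenceSign_of_tendsto_atTop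
      (((tendsto_partialSum_atTop (fun n hn => hn.2.le) hp).atTop_add
        (tendsto_partialSum_nhds hq)).congr hsplit)
  · exact (h.elim hp hq).elim

lemma Tame.union (hA : Tame a A) (hB : Tame a B)
    (hc : divergenceSign a A = none ∨ divergenceSign a B = none ∨
      divergenceSign a A = divergenceSign a B) :
    Tame a (A ∪ B) ∧
      divergenceSign a (A ∪ B) = (divergenceSign a A).orElse fun _ => divergenceSign a B := by
  rw [hA.divergenceSign_eq, hB.divergenceSign_eq] at hc ⊢
  have hsep (p : ℕ → Prop) : {n ∈ A ∪ B | p n} = {n ∈ A | p n} ∪ {n ∈ B | p n} :=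
    sep_union
  obtain ⟨htame, hcode⟩ := signCode_and hA hB hc
  have hU : Tame a (A ∪ B) := by
    rwa [Tame, hsep, hsep, absConvOn_union_iff, absConvOn_union_iff]
  rw [hU.divergenceSign_eq, hsep, hsep, absConvOn_union_iff, absConvOn_union_iff, hcode]
  exact ⟨hU, rfl⟩

lemma CondConv.not_tame_univ (h : CondConv a) : ¬Tame a univ := by
  intro htame
  obtain ⟨⟨L, hL⟩, habs⟩ := h
  have hconv : Tendsto (partialSum a univ) atTop (nhds L) :=
    hL.congr fun N => by simp only [partialSum, indicator_univ]
  have hboth := signCode_eq_none_iff.1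
    (htame.divergenceSign_eq ▸ divergenceSign_of_tendsto_nhds hconv)
  have hcover : {n ∈ univ | 0 < a n} ∪ {n ∈ univ | a n ≤ 0} = univ := by
    ext n; simp [lt_or_ge]
  have := absConvOn_union_iff.2 hboth
  rw [hcover, AbsConvOn, indicator_univ] at this
  exact habs this

lemma CondConv.not_absConvOn_sign (h : CondConv a) (b : Bool) :
    ¬AbsConvOn a {n | decide (0 < a n) = b} := by
  obtain ⟨hpos, hnonpos⟩ := not_or.1 h.not_tame_univ
  cases b
  · convert hnonpos using 2; ext n; simp
  · convert hpos using 2; ext n; simp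

lemma tame_of_forall_sign_eq {b : Bool} (hS : ∀ n ∈ S, decide (0 < a n) = b) : Tame a S := by
  cases b
  · exact .inl (absConvOn_of_eq_empty (eq_empty_of_forall_notMem fun n hn => by
      simpa [hn.2] using hS n hn.1))
  · exact .inr (absConvOn_of_eq_empty (eq_empty_of_forall_notMem fun n hn => by
      simpa [not_lt.2 hn.2] using hS n hn.1))

lemma divergenceSign_of_forall_sign_eq {b : Bool} (hS : ∀ n ∈ S, decide (0 < a n) = b)
    (h : ¬AbsConvOn a S) : divergenceSign a S = some b := by
  cases b
  · exact divergenceSign_of_tendsto_atBot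
      (tendsto_partialSum_atBot (fun n hn => by simpa using hS n hn) h)
  · exact divergenceSign_of_tendsto_atTop
      (tendsto_partialSum_atTop (fun n hn => (by simpa using hS n hn : 0 < a n).le) h)

end Subseries

noncomputable def signPattern {ι : Type*} (a : ι → ℕ → ℝ) (n : ℕ) : ι → Bool :=
  fun i => decide (0 < a i n)

lemma exists_tame_divergenceSign_eq {ι : Type*} [Finite ι] (a : ι → ℕ → ℝ) {x : ι}
    (hx : CondConv (a x)) (y : Bool) :
    ∃ A, (∀ i, Tame (a i) A) ∧ divergenceSign (a x) A = some y := by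
  classical
  cases nonempty_fintype ι
  let T : Finset (ι → Bool) := Finset.univ.filter (· x = y)
  have hT : ¬AbsConvOn (a x) (signPattern a ⁻¹' T) := by
    convert hx.not_absConvOn_sign y using 2
    ext n; simp [T, signPattern]
  obtain ⟨s, hsT, hs⟩ := exists_not_absConvOn_fiber hT
  have hsign (i : ι) : ∀ n ∈ signPattern a ⁻¹' {s}, decide (0 < a i n) = s i :=
    fun n hn => congrFun hn i
  refine ⟨_, fun i => tame_of_forall_sign_eq (hsign i), ?_⟩
  rw [divergenceSign_of_forall_sign_eq (hsign x) hs, (Finset.mem_filter.1 hsT).2]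

lemma pUnion_mem_Fn32 {f : Fin 3 → Option Bool} (g : Fin 3 → Option Bool) (hf : f ∈ Fn32) :
    pUnion f g ∈ Fn32 := by
  obtain ⟨x, hx⟩ := hf
  refine ⟨x, ?_⟩
  cases h : f x <;> simp_all [pUnion]

/-- Lemma 6: the family of all `phi A` for tame `A` with `phi A` nonempty is a full,
union-closed subset of `Fn(3,2)`. -/
theorem phi_family_full_unionClosed (a : Fin 3 → ℕ → ℝ) (hcc : ∀ i, CondConv (a i)) :
    {f | ∃ A : Set ℕ, (∀ i, Tame (a i) A) ∧ phi a A ∈ Fn32 ∧ f = phi a A} ⊆ Fn32 ∧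
    Full {f | ∃ A : Set ℕ, (∀ i, Tame (a i) A) ∧ phi a A ∈ Fn32 ∧ f = phi a A} ∧
    UnionClosed {f | ∃ A : Set ℕ, (∀ i, Tame (a i) A) ∧ phi a A ∈ Fn32 ∧ f = phi a A} := by
  refine ⟨?_, ?_, ?_⟩
  · rintro f ⟨A, -, hA, rfl⟩
    exact hA
  · intro x y
    obtain ⟨A, hA, hAx⟩ := exists_tame_divergenceSign_eq a (hcc x) y
    exact ⟨phi a A, ⟨A, hA, ⟨x, by simp [phi_apply, hAx]⟩, rfl⟩, hAx⟩
  · rintro f ⟨A, hA, hAne, rfl⟩ g ⟨B, hB, -, rfl⟩ hcomp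
    have hU (i : Fin 3) := (hA i).union (hB i) (hcomp i)
    have heq : pUnion (phi a A) (phi a B) = phi a (A ∪ B) := funext fun i => (hU i).2.symm
    exact ⟨A ∪ B, fun i => (hU i).1, heq ▸ pUnion_mem_Fn32 _ hAne, heq⟩
end

section
/- Let ∑ a_n be a conditionally convergent series of real numbers and let A ⊆ ℕ. Suppose both A and ℕ \ A are tame with respect to ∑ a_n, the subseries of a over A tends to +∞, and the subseries of a over ℕ \ A tends to -∞. Then for every C ⊆ A there is some B ⊆ ℕ \ A such that the subseries of a over C ∪ B converges to a real number. -/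
/-!
Tameness forces the two sides apart: since the subseries over `A` tends to `+∞`, its positive part
cannot be absolutely convergent, so its nonpositive part is; symmetrically, the positive terms
outside `A` form an absolutely convergent series. If the positive terms indexed by `C` are also
absolutely summable, `B = ∅` works. Otherwise the subseries over `C` tends to `+∞`, and `B` is
built greedily: a nonpositive term outside `A` is taken exactly when the running sum is
nonnegative. As the terms tend to `0`, a run of nonnegative running sums can climb only by a tail
of `∑ a` corrected by absolutely convergent pieces, and a run of negative ones can fall only by a
tail of the nonpositive part of `C`; so if the sign changes infinitely often, the running sum tends
to `0`. It cannot stay negative, since the subseries over `C` diverges to `+∞`; and if it stays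
nonnegative, it is `∑ a` minus absolutely convergent series minus a monotone sum, which, being
bounded below, converges.
-/

open Filter

open Finset Topology

theorem tendsto_zero_of_tendsto_sum_range {a : ℕ → ℝ} {L : ℝ}
    (h : Tendsto (fun N => ∑ n ∈ range N, a n) atTop (𝓝 L)) : Tendsto a atTop (𝓝 0) := by
  simpa [sum_range_succ] using ((tendsto_add_atTop_iff_nat 1).2 h).sub h

theorem eventually_sum_Ico_le {w g : ℕ → ℝ} (hg : CauchySeq fun n => ∑ k ∈ range n, g k)
    (hwg : ∀ n, w n ≤ g n) {ε : ℝ} (hε : 0 < ε) :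
    ∀ᶠ m in atTop, ∀ n, m ≤ n → ∑ k ∈ Ico m n, w k ≤ ε := by
  obtain ⟨M, hM⟩ := Metric.cauchySeq_iff.1 hg ε hε
  refine eventually_atTop.2 ⟨M, fun m hm n hmn => ?_⟩
  calc ∑ k ∈ Ico m n, w k ≤ ∑ k ∈ Ico m n, g k := sum_le_sum fun k _ => hwg k
    _ = ∑ k ∈ range n, g k - ∑ k ∈ range m, g k := sum_Ico_eq_sub g hmn
    _ ≤ ε := by
      have := hM n (hm.trans hmn) m hm
      rw [Real.dist_eq] at this
      linarith [le_abs_self (∑ k ∈ range n, g k - ∑ k ∈ range m, g k)]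

theorem eventually_neg_le_sum_Ico {w h : ℕ → ℝ} (hh : CauchySeq fun n => ∑ k ∈ range n, h k)
    (hhw : ∀ n, h n ≤ w n) {ε : ℝ} (hε : 0 < ε) :
    ∀ᶠ m in atTop, ∀ n, m ≤ n → -ε ≤ ∑ k ∈ Ico m n, w k := by
  have hh' : CauchySeq fun n => ∑ k ∈ range n, -h k := by
    simpa only [sum_neg_distrib, Pi.neg_def] using hh.neg
  filter_upwards [eventually_sum_Ico_le hh' (fun n => neg_le_neg (hhw n)) hε] with m hm n hmn
  exact neg_le.1 (by simpa only [sum_neg_distrib] using hm n hmn)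

theorem tendsto_sum_range_or_tendsto_atBot {w g : ℕ → ℝ} {G : ℝ}
    (hg : Tendsto (fun n => ∑ k ∈ range n, g k) atTop (𝓝 G)) (hwg : ∀ n, w n ≤ g n) :
    (∃ L, Tendsto (fun n => ∑ k ∈ range n, w k) atTop (𝓝 L)) ∨
      Tendsto (fun n => ∑ k ∈ range n, w k) atTop atBot := by
  have hmono : Monotone fun n => ∑ k ∈ range n, (g k - w k) :=
    monotone_nat_of_le_succ fun n => by
      rw [sum_range_succ]; linarith [hwg n]
  have hw : ∀ n, ∑ k ∈ range n, w k = ∑ k ∈ range n, g k + -∑ k ∈ range n, (g k - w k) := by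
    intro n; rw [sum_sub_distrib]; ring
  simp only [hw]
  rcases tendsto_atTop_of_monotone hmono with htop | ⟨P, hP⟩
  · exact Or.inr (hg.add_atBot (tendsto_neg_atTop_atBot.comp htop))
  · exact Or.inl ⟨_, hg.add hP.neg⟩

theorem exists_neg_nonneg_succ {f : ℕ → ℝ} {p n : ℕ} (hpn : p ≤ n) (hp : f p < 0) (hn : 0 ≤ f n) :
    ∃ k, p ≤ k ∧ f k < 0 ∧ 0 ≤ f (k + 1) := by
  induction n, hpn using Nat.le_induction with
  | base => exact absurd hn hp.not_ge
  | succ n hpn ih =>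
    by_cases hfn : 0 ≤ f n
    · exact ih hfn
    · exact ⟨n, hpn, not_le.1 hfn, hn⟩

noncomputable def greedySum (u v : ℕ → ℝ) : ℕ → ℝ
  | 0 => 0
  | n + 1 => greedySum u v n + u n + if 0 ≤ greedySum u v n then v n else 0

section greedySum

variable {u v : ℕ → ℝ}

theorem greedySum_succ_of_nonneg {n : ℕ} (h : 0 ≤ greedySum u v n) :
    greedySum u v (n + 1) = greedySum u v n + (u n + v n) := by
  rw [greedySum, if_pos h, add_assoc]

theorem greedySum_succ_of_neg {n : ℕ} (h : greedySum u v n < 0) :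
    greedySum u v (n + 1) = greedySum u v n + u n := by
  rw [greedySum, if_neg h.not_ge, add_zero]

theorem greedySum_eq_add_sum_Ico_of_nonneg {m n : ℕ} (hmn : m ≤ n)
    (h : ∀ k, m ≤ k → k < n → 0 ≤ greedySum u v k) :
    greedySum u v n = greedySum u v m + ∑ k ∈ Ico m n, (u k + v k) := by
  induction n, hmn using Nat.le_induction with
  | base => simp
  | succ n hmn ih =>
    rw [greedySum_succ_of_nonneg (h n hmn n.lt_succ_self), ih fun k hk hkn => h k hk (by omega),
      sum_Ico_succ_top hmn, add_assoc]

theorem greedySum_eq_add_sum_Ico_of_neg {m n : ℕ} (hmn : m ≤ n)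
    (h : ∀ k, m ≤ k → k < n → greedySum u v k < 0) :
    greedySum u v n = greedySum u v m + ∑ k ∈ Ico m n, u k := by
  induction n, hmn using Nat.le_induction with
  | base => simp
  | succ n hmn ih =>
    rw [greedySum_succ_of_neg (h n hmn n.lt_succ_self), ih fun k hk hkn => h k hk (by omega),
      sum_Ico_succ_top hmn, add_assoc]

theorem greedySum_run_bounds {α β : ℝ} {q : ℕ} (hup : ∀ n, q ≤ n → u n ≤ α)
    (hdown : ∀ n, q ≤ n → -β ≤ u n + v n) (hq₁ : -β ≤ greedySum u v q)
    (hq₂ : greedySum u v q ≤ α) (n : ℕ) (hqn : q ≤ n) :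
    (0 ≤ greedySum u v n →
        ∃ m, q ≤ m ∧ m ≤ n ∧ greedySum u v n ≤ α + ∑ k ∈ Ico m n, (u k + v k)) ∧
      (greedySum u v n < 0 → ∃ m, q ≤ m ∧ m ≤ n ∧ -β + ∑ k ∈ Ico m n, u k ≤ greedySum u v n) := by
  induction n, hqn using Nat.le_induction with
  | base => exact ⟨fun _ => ⟨q, le_rfl, le_rfl, by simpa using hq₂⟩,
      fun _ => ⟨q, le_rfl, le_rfl, by simpa using hq₁⟩⟩
  | succ n hqn ih =>
    rcases le_or_gt 0 (greedySum u v n) with hn | hn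
    · rw [greedySum_succ_of_nonneg hn]
      refine ⟨fun _ => ?_, fun _ => ⟨n + 1, by omega, le_rfl, ?_⟩⟩
      · obtain ⟨m, hqm, hmn, hm⟩ := ih.1 hn
        exact ⟨m, hqm, by omega, by rw [sum_Ico_succ_top hmn]; linarith⟩
      · simp only [Ico_self, sum_empty, add_zero]
        linarith [hdown n hqn]
    · rw [greedySum_succ_of_neg hn]
      refine ⟨fun _ => ⟨n + 1, by omega, le_rfl, ?_⟩, fun _ => ?_⟩
      · simp only [Ico_self, sum_empty, add_zero]
        linarith [hup n hqn]
      · obtain ⟨m, hqm, hmn, hm⟩ := ih.2 hn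
        exact ⟨m, hqm, by omega, by rw [sum_Ico_succ_top hmn]; linarith⟩

theorem tendsto_greedySum_zero_of_frequently (hu : Tendsto u atTop (𝓝 0))
    (hv : Tendsto v atTop (𝓝 0))
    (hu_tail : ∀ ε > 0, ∀ᶠ m in atTop, ∀ n, m ≤ n → -ε ≤ ∑ k ∈ Ico m n, u k)
    (huv_tail : ∀ ε > 0, ∀ᶠ m in atTop, ∀ n, m ≤ n → ∑ k ∈ Ico m n, (u k + v k) ≤ ε)
    (hneg : ∃ᶠ n in atTop, greedySum u v n < 0) (hnonneg : ∃ᶠ n in atTop, 0 ≤ greedySum u v n) :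
    Tendsto (greedySum u v) atTop (𝓝 0) := by
  refine Metric.tendsto_atTop.2 fun ε hε => ?_
  obtain ⟨δ, hδ, rfl⟩ : ∃ δ, 0 < δ ∧ ε = 4 * δ := ⟨ε / 4, by positivity, by ring⟩
  have hsmall : ∀ᶠ n in atTop, |u n| ≤ δ ∧ |v n| ≤ δ := by
    have hδ' : Set.Icc (-δ) δ ∈ 𝓝 (0 : ℝ) := Icc_mem_nhds (by linarith) hδ
    filter_upwards [hu hδ', hv hδ'] with n hun hvn
    exact ⟨abs_le.2 hun, abs_le.2 hvn⟩
  obtain ⟨M, hM⟩ := eventually_atTop.1 (hsmall.and ((hu_tail δ hδ).and (huv_tail δ hδ)))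
  obtain ⟨p, hMp, hp⟩ := frequently_atTop.1 hneg M
  obtain ⟨r, hpr, hr⟩ := frequently_atTop.1 hnonneg p
  obtain ⟨k, hpk, hk, hk₁⟩ := exists_neg_nonneg_succ hpr hp hr
  have hMk : M ≤ k := hMp.trans hpk
  have hq : greedySum u v (k + 1) ≤ δ := by
    rw [greedySum_succ_of_neg hk]
    linarith [(abs_le.1 (hM k hMk).1.1).2]
  refine ⟨k + 1, fun n hn => ?_⟩
  -- an upward crossing lands at most `δ` above `0`, a downward one at most `2 * δ` below
  have hbounds := greedySum_run_bounds (α := δ) (β := 2 * δ)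
    (fun n hn => (abs_le.1 (hM n (by omega)).1.1).2)
    (fun n hn => by
      have := hM n (by omega)
      linarith [(abs_le.1 this.1.1).1, (abs_le.1 this.1.2).1])
    (by linarith) hq n hn
  rw [Real.dist_eq, sub_zero, abs_lt]
  rcases le_or_gt 0 (greedySum u v n) with hTn | hTn
  · obtain ⟨m, hkm, hmn, hm⟩ := hbounds.1 hTn
    have := (hM m (by omega)).2.2 n hmn
    constructor <;> linarith
  · obtain ⟨m, hkm, hmn, hm⟩ := hbounds.2 hTn
    have := (hM m (by omega)).2.1 n hmn
    constructor <;> linarith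

theorem frequently_greedySum_nonneg (hu : Tendsto (fun n => ∑ k ∈ range n, u k) atTop atTop) :
    ∃ᶠ n in atTop, 0 ≤ greedySum u v n := by
  by_contra hneg
  obtain ⟨m, hm⟩ := eventually_atTop.1 (not_frequently.1 hneg)
  have htop : Tendsto (greedySum u v) atTop atTop := by
    refine (tendsto_atTop_add_const_left _ (greedySum u v m - ∑ k ∈ range m, u k) hu).congr' ?_
    filter_upwards [eventually_ge_atTop m] with n hmn
    rw [greedySum_eq_add_sum_Ico_of_neg hmn fun k hk _ => not_le.1 (hm k hk),
      sum_Ico_eq_sub u hmn]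
    ring
  obtain ⟨n, hn, hmn⟩ := ((htop.eventually_ge_atTop 0).and (eventually_ge_atTop m)).exists
  exact hm n hmn hn

theorem exists_tendsto_greedySum_of_eventually_nonneg {g : ℕ → ℝ} {G : ℝ}
    (hg : Tendsto (fun n => ∑ k ∈ range n, g k) atTop (𝓝 G)) (huvg : ∀ n, u n + v n ≤ g n)
    (hnonneg : ∀ᶠ n in atTop, 0 ≤ greedySum u v n) :
    ∃ L, Tendsto (greedySum u v) atTop (𝓝 L) := by
  obtain ⟨m, hm⟩ := eventually_atTop.1 hnonneg
  have hT : greedySum u v =ᶠ[atTop] fun n =>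
      greedySum u v m - ∑ k ∈ range m, (u k + v k) + ∑ k ∈ range n, (u k + v k) := by
    filter_upwards [eventually_ge_atTop m] with n hmn
    rw [greedySum_eq_add_sum_Ico_of_nonneg hmn fun k hk _ => hm k hk,
      sum_Ico_eq_sub _ hmn]
    ring
  rcases tendsto_sum_range_or_tendsto_atBot hg huvg with ⟨L, hL⟩ | hbot
  · exact ⟨_, (tendsto_const_nhds.add hL).congr' hT.symm⟩
  · have hTbot := (tendsto_atBot_add_const_left _ _ hbot).congr' hT.symm
    obtain ⟨n, hn₁, hn₂⟩ := ((hTbot.eventually_lt_atBot 0).and hnonneg).exists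
    exact absurd hn₂ (not_le.2 hn₁)

theorem exists_tendsto_greedySum {h g : ℕ → ℝ} {G : ℝ} (hu : Tendsto u atTop (𝓝 0))
    (hv : Tendsto v atTop (𝓝 0)) (hh : Summable h) (hhu : ∀ n, h n ≤ u n)
    (hutop : Tendsto (fun n => ∑ k ∈ range n, u k) atTop atTop)
    (hg : Tendsto (fun n => ∑ k ∈ range n, g k) atTop (𝓝 G)) (huvg : ∀ n, u n + v n ≤ g n) :
    ∃ L, Tendsto (greedySum u v) atTop (𝓝 L) := by
  by_cases hneg : ∃ᶠ n in atTop, greedySum u v n < 0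
  · exact ⟨0, tendsto_greedySum_zero_of_frequently hu hv
      (fun _ hε => eventually_neg_le_sum_Ico hh.hasSum.tendsto_sum_nat.cauchySeq hhu hε)
      (fun _ hε => eventually_sum_Ico_le hg.cauchySeq huvg hε) hneg
      (frequently_greedySum_nonneg hutop)⟩
  · exact exists_tendsto_greedySum_of_eventually_nonneg hg huvg
      ((not_frequently.1 hneg).mono fun _ => not_lt.1)

end greedySum

theorem indicator_eq_indicator_pos_sub_indicator_nonpos (a : ℕ → ℝ) (X : Set ℕ) (n : ℕ) :
    X.indicator a n = {k ∈ X | 0 < a k}.indicator (fun k => |a k|) n -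
      {k ∈ X | a k ≤ 0}.indicator (fun k => |a k|) n := by
  by_cases hX : n ∈ X
  · rcases lt_or_ge 0 (a n) with ha | ha
    · simp [hX, ha, ha.not_ge, abs_of_pos]
    · simp [hX, ha, ha.not_gt, abs_of_nonpos]
  · simp [hX]

theorem indicator_le_indicator_pos_abs (a : ℕ → ℝ) (X : Set ℕ) (n : ℕ) :
    X.indicator a n ≤ {k ∈ X | 0 < a k}.indicator (fun k => |a k|) n := by
  rw [indicator_eq_indicator_pos_sub_indicator_nonpos a X n]
  linarith [Set.indicator_nonneg (fun k (_ : k ∈ {k ∈ X | a k ≤ 0}) => abs_nonneg (a k)) n]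

theorem neg_indicator_nonpos_abs_le_indicator (a : ℕ → ℝ) (X : Set ℕ) (n : ℕ) :
    -{k ∈ X | a k ≤ 0}.indicator (fun k => |a k|) n ≤ X.indicator a n := by
  rw [indicator_eq_indicator_pos_sub_indicator_nonpos a X n]
  linarith [Set.indicator_nonneg (fun k (_ : k ∈ {k ∈ X | 0 < a k}) => abs_nonneg (a k)) n]

section Subseries

variable {a : ℕ → ℝ}

theorem AbsConvOn.mono_s13 {X Y : Set ℕ} (h : AbsConvOn a Y) (hXY : X ⊆ Y) : AbsConvOn a X :=
  h.of_nonneg_of_le (fun _ => Set.indicator_nonneg (fun _ _ => abs_nonneg _) _)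
    (Set.indicator_le_indicator_of_subset hXY fun _ => abs_nonneg _)

theorem AbsConvOn.summable_indicator_s13 {X : Set ℕ} (h : AbsConvOn a X) : Summable (X.indicator a) :=
  .of_norm <| h.congr fun n => by rw [norm_indicator_eq_indicator_norm]; rfl

theorem partialSum_le_tsum_of_absConvOn_pos {X : Set ℕ} (h : AbsConvOn a {n ∈ X | 0 < a n})
    (N : ℕ) : partialSum a X N ≤ ∑' n, {k ∈ X | 0 < a k}.indicator (fun k => |a k|) n :=
  calc partialSum a X N ≤ ∑ n ∈ range N, {k ∈ X | 0 < a k}.indicator (fun k => |a k|) n :=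
        sum_le_sum fun n _ => indicator_le_indicator_pos_abs a X n
    _ ≤ _ := h.sum_le_tsum _ fun n _ => Set.indicator_nonneg (fun _ _ => abs_nonneg _) n

theorem neg_tsum_le_partialSum_of_absConvOn_nonpos {X : Set ℕ}
    (h : AbsConvOn a {n ∈ X | a n ≤ 0}) (N : ℕ) :
    -∑' n, {k ∈ X | a k ≤ 0}.indicator (fun k => |a k|) n ≤ partialSum a X N :=
  calc -∑' n, {k ∈ X | a k ≤ 0}.indicator (fun k => |a k|) n
      ≤ -∑ n ∈ range N, {k ∈ X | a k ≤ 0}.indicator (fun k => |a k|) n :=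
        neg_le_neg (h.sum_le_tsum _ fun n _ => Set.indicator_nonneg (fun _ _ => abs_nonneg _) n)
    _ ≤ partialSum a X N := by
      rw [← sum_neg_distrib]
      exact sum_le_sum fun n _ => neg_indicator_nonpos_abs_le_indicator a X n

theorem Tame.absConvOn_nonpos {X : Set ℕ} (hX : Tame a X)
    (htop : Tendsto (partialSum a X) atTop atTop) : AbsConvOn a {n ∈ X | a n ≤ 0} :=
  hX.resolve_left fun h => by
    obtain ⟨N, hN⟩ := (htop.eventually_gt_atTop _).exists
    exact hN.not_ge (partialSum_le_tsum_of_absConvOn_pos h N)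

theorem Tame.absConvOn_pos {X : Set ℕ} (hX : Tame a X)
    (hbot : Tendsto (partialSum a X) atTop atBot) : AbsConvOn a {n ∈ X | 0 < a n} :=
  hX.resolve_right fun h => by
    obtain ⟨N, hN⟩ := (hbot.eventually_lt_atBot _).exists
    exact hN.not_ge (neg_tsum_le_partialSum_of_absConvOn_nonpos h N)

theorem exists_tendsto_partialSum_of_absConvOn {C : Set ℕ} (hpos : AbsConvOn a {n ∈ C | 0 < a n})
    (hnonpos : AbsConvOn a {n ∈ C | a n ≤ 0}) : ∃ L, Tendsto (partialSum a C) atTop (𝓝 L) :=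
  ⟨_, ((hpos.sub hnonpos).congr fun n =>
    (indicator_eq_indicator_pos_sub_indicator_nonpos a C n).symm).hasSum.tendsto_sum_nat⟩

theorem tendsto_partialSum_atTop_of_not_absConvOn_pos {C : Set ℕ}
    (hpos : ¬AbsConvOn a {n ∈ C | 0 < a n}) (hnonpos : AbsConvOn a {n ∈ C | a n ≤ 0}) :
    Tendsto (partialSum a C) atTop atTop := by
  have hdiv := (not_summable_iff_tendsto_nat_atTop_of_nonneg
    fun n => Set.indicator_nonneg (fun _ _ => abs_nonneg _) n).1 hpos
  refine (hdiv.atTop_add (hnonpos.hasSum.tendsto_sum_nat.neg)).congr fun N => ?_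
  simp only [partialSum, indicator_eq_indicator_pos_sub_indicator_nonpos a C, sub_eq_add_neg,
    sum_add_distrib, sum_neg_distrib]

theorem partialSum_union_eq_greedySum {C N : Set ℕ} (hCN : Disjoint C N) (M : ℕ) :
    partialSum a (C ∪ {n ∈ N | 0 ≤ greedySum (C.indicator a) (N.indicator a) n}) M =
      greedySum (C.indicator a) (N.indicator a) M := by
  induction M with
  | zero => simp [partialSum, greedySum]
  | succ M ih =>
    have hB : Disjoint C {n ∈ N | 0 ≤ greedySum (C.indicator a) (N.indicator a) n} :=
      hCN.mono_right fun _ hn => hn.1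
    rw [partialSum, sum_range_succ, ← partialSum, ih, greedySum,
      Set.indicator_union_of_disjoint hB, add_assoc]
    by_cases hM : M ∈ N <;> by_cases hT : 0 ≤ greedySum (C.indicator a) (N.indicator a) M <;>
      simp [hM, hT]

theorem indicator_add_indicator_nonpos_compl_le {A C : Set ℕ} (hCA : C ⊆ A) (n : ℕ) :
    C.indicator a n + {k ∈ Set.univ \ A | a k ≤ 0}.indicator a n ≤
      a n - {k ∈ Set.univ \ A | 0 < a k}.indicator a n +
        {k ∈ A | a k ≤ 0}.indicator (fun k => |a k|) n := by
  have hC : n ∉ A → n ∉ C := fun hA hC => hA (hCA hC)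
  by_cases hA : n ∈ A <;> by_cases hC : n ∈ C <;> rcases lt_or_ge 0 (a n) with ha | ha <;>
    simp_all [abs_of_nonpos, not_lt, not_le, le_of_lt]

end Subseries

/-- Lemma 9 (balance 2): if `A` and `ℕ \ A` are tame, the subseries over `A` tends to `+∞`
and the subseries over `ℕ \ A` tends to `-∞`, then for every `C ⊆ A` there is `B ⊆ ℕ \ A`
such that the subseries over `C ∪ B` converges. -/
theorem balance_two (a : ℕ → ℝ) (hcc : CondConv a) (A : Set ℕ)
    (hA : Tame a A) (hAc : Tame a (Set.univ \ A))
    (htop : Tendsto (partialSum a A) atTop atTop)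
    (hbot : Tendsto (partialSum a (Set.univ \ A)) atTop atBot) :
    ∀ C ⊆ A, ∃ B ⊆ Set.univ \ A, ∃ L : ℝ,
      Tendsto (partialSum a (C ∪ B)) atTop (nhds L) := by
  intro C hCA
  obtain ⟨S, hS⟩ := hcc.1
  have hAnonpos := hA.absConvOn_nonpos htop
  have hCnonpos : AbsConvOn a {n ∈ C | a n ≤ 0} := hAnonpos.mono_s13 fun n hn => ⟨hCA hn.1, hn.2⟩
  by_cases hCpos : AbsConvOn a {n ∈ C | 0 < a n}
  · exact ⟨∅, Set.empty_subset _, by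
      simpa only [Set.union_empty] using exists_tendsto_partialSum_of_absConvOn hCpos hCnonpos⟩
  set N := {n ∈ Set.univ \ A | a n ≤ 0}
  have hCN : Disjoint C N := Set.disjoint_left.2 fun n hC hN => hN.1.2 (hCA hC)
  have hind : ∀ X : Set ℕ, Tendsto (X.indicator a) atTop (𝓝 0) := fun X =>
    squeeze_zero_norm (fun n => norm_indicator_le_norm_self a n)
      (tendsto_norm_zero.comp (tendsto_zero_of_tendsto_sum_range hS))
  obtain ⟨G, hg⟩ : ∃ G, Tendsto (fun n => ∑ k ∈ range n, (a k -
      {k ∈ Set.univ \ A | 0 < a k}.indicator a k + {k ∈ A | a k ≤ 0}.indicator (fun k => |a k|) k))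
      atTop (𝓝 G) := ⟨_, by
    simpa only [sum_add_distrib, sum_sub_distrib] using
      (hS.sub (hAc.absConvOn_pos hbot).summable_indicator_s13.hasSum.tendsto_sum_nat).add
        hAnonpos.hasSum.tendsto_sum_nat⟩
  obtain ⟨L, hL⟩ := exists_tendsto_greedySum (hind C) (hind N) hCnonpos.neg
    (neg_indicator_nonpos_abs_le_indicator a C)
    (tendsto_partialSum_atTop_of_not_absConvOn_pos hCpos hCnonpos) hg
    (indicator_add_indicator_nonpos_compl_le hCA)
  exact ⟨_, fun n hn => hn.1.1, L, hL.congr fun M => (partialSum_union_eq_greedySum hCN M).symm⟩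
end
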